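/- arXiv:1512.02844 — 2 statements merged into one kernel-verified Lean document; each statement's English description precedes it below -/
import Mathlib

section
/- Let n be even, n ≥ 6, and S = {f, rf, r^{n/2}} in D_n. Then λ₂(D_n, S) = λ₁(D_n, S) = n/2. -/
/-!
Write `n = 2m`, so that the generating set is `{sr 0, sr (-1), r m}`. Left multiplication by
`sr 0` and `sr (-1)` moves each element one step along a single cycle of length `2n` through
`DihedralGroup n`, and the central involution `r m` moves it half-way round. So the Cayley graph
is a `2n`-cycle with all its antipodal chords, and word length is graph distance from the origin,
`min (d p) (d (p + n) + 1)` with `d` the cyclic distance to `0`: this function grows by at most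
one along an edge, and away from the origin some edge decreases it. Its maximum `m` is attained
at the reflection `sr (m / 2)`, which by parity is conjugate to `sr 0` or `sr (-1)` and, `r m`
being central, also to `sr 0 * r m` or `sr (-1) * r m`.
-/

open DihedralGroup

/-- The word length of `g` with respect to a generating set `S`: the minimal
number of letters of `S` needed to write `g` as a product. -/
noncomputable def wordLength {G : Type*} [Group G] (S : Set G) (g : G) : ℕ :=
  sInf {k | ∃ l : List G, (∀ x ∈ l, x ∈ S) ∧ l.prod = g ∧ l.length = k}

open ZMod

section WordLength

variable {G : Type*} [Group G] {S : Set G}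

theorem wordLength_le_length {l : List G} (hl : ∀ x ∈ l, x ∈ S) :
    wordLength S l.prod ≤ l.length :=
  Nat.sInf_le ⟨l, hl, rfl, rfl⟩

theorem apply_prod_le_length {f : G → ℕ} (h1 : f 1 = 0)
    (hlip : ∀ s ∈ S, ∀ g, f (s * g) ≤ f g + 1) {l : List G} (hl : ∀ x ∈ l, x ∈ S) :
    f l.prod ≤ l.length := by
  induction l with
  | nil => simp [h1]
  | cons x l ih =>
    rw [List.forall_mem_cons] at hl
    rw [List.prod_cons, List.length_cons]
    exact (hlip x hl.1 _).trans (Nat.add_le_add_right (ih hl.2) 1)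

theorem exists_word_of_descent {f : G → ℕ}
    (hdesc : ∀ g ≠ 1, ∃ s ∈ S, ∃ h, g = s * h ∧ f h < f g) (g : G) :
    ∃ l : List G, (∀ x ∈ l, x ∈ S) ∧ l.prod = g ∧ l.length ≤ f g := by
  induction hk : f g using Nat.strong_induction_on generalizing g with
  | _ k ih =>
    rcases eq_or_ne g 1 with rfl | hg
    · exact ⟨[], by simp, rfl, Nat.zero_le _⟩
    · obtain ⟨s, hs, h, rfl, hlt⟩ := hdesc g hg
      obtain ⟨l, hl, rfl, hlen⟩ := ih _ (hk ▸ hlt) h rfl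
      exact ⟨s :: l, List.forall_mem_cons.2 ⟨hs, hl⟩, List.prod_cons, by grind⟩

theorem wordLength_eq_of_lipschitz_of_descent {f : G → ℕ} (h1 : f 1 = 0)
    (hlip : ∀ s ∈ S, ∀ g, f (s * g) ≤ f g + 1)
    (hdesc : ∀ g ≠ 1, ∃ s ∈ S, ∃ h, g = s * h ∧ f h < f g) (g : G) :
    wordLength S g = f g := by
  obtain ⟨l, hl, rfl, hlen⟩ := exists_word_of_descent hdesc g
  refine le_antisymm ((wordLength_le_length hl).trans hlen) ?_
  have hne : {k | ∃ l' : List G, (∀ x ∈ l', x ∈ S) ∧ l'.prod = l.prod ∧ l'.length = k}.Nonempty :=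
    ⟨_, l, hl, rfl, rfl⟩
  obtain ⟨l', hl', hprod, hlen'⟩ := Nat.sInf_mem hne
  rw [wordLength, ← hlen', ← hprod]
  exact apply_prod_le_length h1 hlip hl'

end WordLength

namespace ZMod

variable {N : ℕ}

theorem natAbs_valMinAbs_add_le_add (p q : ZMod N) :
    (p + q).valMinAbs.natAbs ≤ p.valMinAbs.natAbs + q.valMinAbs.natAbs :=
  (natAbs_valMinAbs_add_le p q).trans (Int.natAbs_add_le _ _)

theorem natAbs_valMinAbs_one_le : (1 : ZMod N).valMinAbs.natAbs ≤ 1 := by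
  rcases N with _ | _ | N
  · rfl
  · simp [Subsingleton.elim (1 : ZMod 1) 0]
  · have h := valMinAbs_natCast_of_le_half (n := N + 2) (a := 1) (by omega)
    rw [Nat.cast_one] at h
    rw [h]; rfl

theorem natAbs_valMinAbs_add_one_le (p : ZMod N) :
    (p + 1).valMinAbs.natAbs ≤ p.valMinAbs.natAbs + 1 :=
  (natAbs_valMinAbs_add_le_add p 1).trans (Nat.add_le_add_left natAbs_valMinAbs_one_le _)

theorem natAbs_valMinAbs_sub_one_le (p : ZMod N) :
    (p - 1).valMinAbs.natAbs ≤ p.valMinAbs.natAbs + 1 := by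
  rw [sub_eq_add_neg]
  exact (natAbs_valMinAbs_add_le_add p (-1)).trans
    (Nat.add_le_add_left ((natAbs_valMinAbs_neg 1).trans_le natAbs_valMinAbs_one_le) _)

theorem natAbs_valMinAbs_add_one_lt_or_sub_one_lt [NeZero N] {p : ZMod N} (hp : p ≠ 0) :
    (p + 1).valMinAbs.natAbs < p.valMinAbs.natAbs ∨
      (p - 1).valMinAbs.natAbs < p.valMinAbs.natAbs := by
  obtain ⟨hlo, hhi⟩ := p.valMinAbs_mem_Ioc
  have hx : p.valMinAbs ≠ 0 := by rwa [Ne, valMinAbs_eq_zero]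
  rcases hx.lt_or_gt with hneg | hpos
  · left
    have : (p + 1).valMinAbs = p.valMinAbs + 1 :=
      (valMinAbs_spec _ _).2 ⟨by push_cast; rfl, by constructor <;> omega⟩
    omega
  · right
    have : (p - 1).valMinAbs = p.valMinAbs - 1 :=
      (valMinAbs_spec _ _).2 ⟨by push_cast; rfl, by constructor <;> omega⟩
    omega

theorem natCast_add_self_eq_zero (n : ℕ) : (n : ZMod (2 * n)) + n = 0 := by
  rw [← two_mul]; exact_mod_cast natCast_self (2 * n)

theorem natAbs_valMinAbs_add_natAbs_valMinAbs_add_half {n : ℕ} [NeZero n] (p : ZMod (2 * n)) :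
    p.valMinAbs.natAbs + (p + n).valMinAbs.natAbs = n := by
  obtain ⟨hlo, hhi⟩ := p.valMinAbs_mem_Ioc
  push_cast at hlo hhi
  rcases le_or_gt p.valMinAbs 0 with hneg | hpos
  · have : (p + n).valMinAbs = p.valMinAbs + n :=
      (valMinAbs_spec _ _).2 ⟨by push_cast; rfl, by push_cast; constructor <;> omega⟩
    omega
  · have : (p + n).valMinAbs = p.valMinAbs - n :=
      (valMinAbs_spec _ _).2 ⟨by
        push_cast
        rw [sub_eq_add_neg, neg_eq_of_add_eq_zero_left (natCast_add_self_eq_zero n)],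
        by push_cast; constructor <;> omega⟩
    omega

def doubleHom (n : ℕ) : ZMod n →+ ZMod (2 * n) :=
  lift n ⟨(AddMonoidHom.mulLeft 2).comp (Int.castAddHom (ZMod (2 * n))), by
    change (2 : ZMod (2 * n)) * ((n : ℤ) : ZMod (2 * n)) = 0
    exact_mod_cast natCast_self (2 * n)⟩

theorem doubleHom_natCast {n : ℕ} (j : ℕ) : doubleHom n j = 2 * j := by
  rw [← Int.cast_natCast j]
  exact (lift_coe _ _ _).trans (by simp)

end ZMod

/-- Graph distance from `0` in the cycle `ZMod (2 * n)` with the chords `p — p + n` added. -/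
def ladderDist (n : ℕ) (p : ZMod (2 * n)) : ℕ :=
  min p.valMinAbs.natAbs ((p + n).valMinAbs.natAbs + 1)

section LadderDist

variable {n : ℕ}

theorem ladderDist_zero : ladderDist n 0 = 0 := by
  simp [ladderDist]

theorem ladderDist_add_one_le (p : ZMod (2 * n)) :
    ladderDist n (p + 1) ≤ ladderDist n p + 1 := by
  have h₁ := natAbs_valMinAbs_add_one_le p
  have h₂ := natAbs_valMinAbs_add_one_le (p + (n : ZMod (2 * n)))
  rw [add_right_comm] at h₂
  unfold ladderDist; omega

theorem ladderDist_sub_one_le (p : ZMod (2 * n)) :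
    ladderDist n (p - 1) ≤ ladderDist n p + 1 := by
  have h₁ := natAbs_valMinAbs_sub_one_le p
  have h₂ := natAbs_valMinAbs_sub_one_le (p + (n : ZMod (2 * n)))
  rw [← sub_add_eq_add_sub] at h₂
  unfold ladderDist; omega

theorem ladderDist_add_half_le (p : ZMod (2 * n)) :
    ladderDist n (p + n) ≤ ladderDist n p + 1 := by
  rw [ladderDist, add_assoc, natCast_add_self_eq_zero, add_zero]
  unfold ladderDist; omega

theorem ladderDist_add_one_lt_or_sub_one_lt_or_add_half_lt [NeZero n] {p : ZMod (2 * n)}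
    (hp : p ≠ 0) :
    ladderDist n (p + 1) < ladderDist n p ∨ ladderDist n (p - 1) < ladderDist n p ∨
      ladderDist n (p + n) < ladderDist n p := by
  have h₁ : ladderDist n (p + n) ≤ (p + n).valMinAbs.natAbs := min_le_left _ _
  have h₂ : ladderDist n (p + 1) ≤ (p + 1).valMinAbs.natAbs := min_le_left _ _
  have h₃ : ladderDist n (p - 1) ≤ (p - 1).valMinAbs.natAbs := min_le_left _ _
  have := natAbs_valMinAbs_add_one_lt_or_sub_one_lt hp
  unfold ladderDist at *; omega

theorem ladderDist_le [NeZero n] (p : ZMod (2 * n)) : ladderDist n p ≤ (n + 1) / 2 := by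
  have := natAbs_valMinAbs_add_natAbs_valMinAbs_add_half p
  unfold ladderDist; omega

theorem ladderDist_natCast [NeZero n] {j : ℕ} (hj : j ≤ n) :
    ladderDist n j = min j (n - j + 1) := by
  have hsum := natAbs_valMinAbs_add_natAbs_valMinAbs_add_half (j : ZMod (2 * n))
  rw [valMinAbs_natCast_of_le_half (by omega), Int.natAbs_natCast] at hsum
  rw [ladderDist, valMinAbs_natCast_of_le_half (by omega), Int.natAbs_natCast]
  omega

end LadderDist

namespace DihedralGroup

variable {n m : ℕ}

/-- Position on the `2n`-cycle along which `sr 0 * ·` and `sr (-1) * ·` move by `±1`. -/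
def cyclePos : DihedralGroup n → ZMod (2 * n)
  | r k => doubleHom n k
  | sr k => doubleHom n k + 1

theorem cyclePos_one : cyclePos (1 : DihedralGroup n) = 0 :=
  map_zero (doubleHom n)

theorem cyclePos_sr_natCast (j : ℕ) :
    cyclePos (sr (j : ZMod n)) = ((2 * j + 1 : ℕ) : ZMod (2 * n)) := by
  rw [cyclePos, doubleHom_natCast]; push_cast; rfl

theorem cyclePos_sr_mul (g : DihedralGroup n) :
    cyclePos (sr 0 * g) = cyclePos g + 1 ∧ cyclePos (sr (-1) * g) = cyclePos g - 1 ∨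
      cyclePos (sr 0 * g) = cyclePos g - 1 ∧ cyclePos (sr (-1) * g) = cyclePos g + 1 := by
  have h1 : doubleHom n 1 = 2 := by simpa using doubleHom_natCast (n := n) 1
  rcases g with k | k
  · left
    simp only [sr_mul_r, cyclePos, zero_add, map_add, map_neg, h1, true_and]
    ring
  · right
    simp only [sr_mul_sr, cyclePos, sub_zero, sub_neg_eq_add, map_add, h1]
    constructor <;> ring

theorem cyclePos_r_half_mul (hm : n = 2 * m) (g : DihedralGroup n) :
    cyclePos (r (m : ZMod n) * g) = cyclePos g + n := by
  have hdm : doubleHom n m = n := by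
    rw [doubleHom_natCast]; exact_mod_cast congrArg Nat.cast hm.symm
  rcases g with k | k
  · simp only [r_mul_r, cyclePos, map_add, hdm]; ring
  · simp only [r_mul_sr, cyclePos, map_sub, hdm]
    linear_combination -natCast_add_self_eq_zero n

theorem eq_one_of_cyclePos_eq_zero [NeZero n] {g : DihedralGroup n} (hg : cyclePos g = 0) :
    g = 1 := by
  have hk := fun k : ZMod n => k.val_lt
  rcases g with k | k <;> simp only [cyclePos] at hg <;>
    rw [← natCast_zmod_val k, doubleHom_natCast] at hg
  · replace hg := congrArg val (show ((2 * k.val : ℕ) : ZMod (2 * n)) = 0 by exact_mod_cast hg)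
    rw [val_cast_of_lt (by grind), val_zero, mul_eq_zero, val_eq_zero] at hg
    rw [hg.resolve_left two_ne_zero, r_zero]
  · replace hg :=
      congrArg val (show ((2 * k.val + 1 : ℕ) : ZMod (2 * n)) = 0 by exact_mod_cast hg)
    rw [val_cast_of_lt (by grind), val_zero] at hg
    omega

theorem r_half_mul_self (hm : n = 2 * m) : r (m : ZMod n) * r m = 1 := by
  subst hm
  rw [r_mul_r, natCast_add_self_eq_zero, r_zero]

theorem r_half_mul_comm (hm : n = 2 * m) (g : DihedralGroup n) :
    r (m : ZMod n) * g = g * r m := by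
  subst hm
  rcases g with k | k
  · rw [r_mul_r, r_mul_r, add_comm]
  · rw [r_mul_sr, sr_mul_r, sub_eq_add_neg,
      neg_eq_of_add_eq_zero_left (natCast_add_self_eq_zero m)]

theorem wordLength_eq_ladderDist [NeZero n] (hm : n = 2 * m) (g : DihedralGroup n) :
    wordLength {sr 0, sr (-1), r (m : ZMod n)} g = ladderDist n (cyclePos g) := by
  refine wordLength_eq_of_lipschitz_of_descent (f := fun g => ladderDist n (cyclePos g))
    (by simp only [cyclePos_one, ladderDist_zero]) ?_ ?_ g
  · rintro s (rfl | rfl | rfl) g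
    · rcases cyclePos_sr_mul g with ⟨h, -⟩ | ⟨h, -⟩ <;> rw [h]
      exacts [ladderDist_add_one_le _, ladderDist_sub_one_le _]
    · rcases cyclePos_sr_mul g with ⟨-, h⟩ | ⟨-, h⟩ <;> rw [h]
      exacts [ladderDist_sub_one_le _, ladderDist_add_one_le _]
    · rw [cyclePos_r_half_mul hm]
      exact ladderDist_add_half_le _
  · intro g hg
    have step : ∀ s ∈ ({sr 0, sr (-1), r (m : ZMod n)} : Set (DihedralGroup n)),
        ladderDist n (cyclePos (s * g)) < ladderDist n (cyclePos g) →
        ∃ s ∈ ({sr 0, sr (-1), r (m : ZMod n)} : Set (DihedralGroup n)), ∃ h,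
          g = s * h ∧ ladderDist n (cyclePos h) < ladderDist n (cyclePos g) := by
      refine fun s hs hlt => ⟨s, hs, s * g, ?_, hlt⟩
      have hss : s * s = 1 := by
        rcases hs with rfl | rfl | rfl
        exacts [sr_mul_self 0, sr_mul_self (-1), r_half_mul_self hm]
      rw [← mul_assoc, hss, one_mul]
    rcases ladderDist_add_one_lt_or_sub_one_lt_or_add_half_lt
      (mt eq_one_of_cyclePos_eq_zero hg) with h | h | h
    · rcases cyclePos_sr_mul g with ⟨h₀, -⟩ | ⟨-, h₀⟩
      · exact step (sr 0) (by simp) (by rwa [h₀])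
      · exact step (sr (-1)) (by simp) (by rwa [h₀])
    · rcases cyclePos_sr_mul g with ⟨-, h₀⟩ | ⟨h₀, -⟩
      · exact step (sr (-1)) (by simp) (by rwa [h₀])
      · exact step (sr 0) (by simp) (by rwa [h₀])
    · exact step (r m) (by simp) (by rwa [cyclePos_r_half_mul hm])

theorem exists_conj_eq_sr (k : ZMod n) :
    ∃ g, ∃ s ∈ ({sr 0, sr (-1)} : Set (DihedralGroup n)), g * s * g⁻¹ = sr k := by
  obtain ⟨z, rfl⟩ := intCast_surjective k
  obtain ⟨u, rfl | rfl⟩ := Int.even_or_odd' z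
  · refine ⟨r (-u), sr 0, by simp, ?_⟩
    simp only [inv_r, r_mul_sr, sr_mul_r]
    push_cast; ring_nf
  · refine ⟨r (-(u + 1)), sr (-1), by simp, ?_⟩
    simp only [inv_r, r_mul_sr, sr_mul_r]
    push_cast; ring_nf

theorem exists_conj_mul_r_half_eq_sr (hm : n = 2 * m) (k : ZMod n) :
    ∃ g, ∃ s ∈ ({sr 0, sr (-1)} : Set (DihedralGroup n)), g * s * r m * g⁻¹ = sr k := by
  obtain ⟨g, s, hs, hg⟩ := exists_conj_eq_sr (k + (m : ZMod n))
  refine ⟨g, s, hs, ?_⟩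
  rw [mul_assoc (g * s), r_half_mul_comm hm, ← mul_assoc, hg, sr_mul_r, add_assoc]
  subst hm
  rw [natCast_add_self_eq_zero, add_zero]

end DihedralGroup

theorem stmt14 (n : ℕ) (hn : 6 ≤ n) (heven : Even n) :
    letI S : Set (DihedralGroup n) := {sr 0, r 1 * sr 0, (r 1 : DihedralGroup n) ^ (n / 2)}
    IsGreatest {k | ∃ g : DihedralGroup n, ∃ s ∈ S, ∃ s' ∈ S,
        k = wordLength S (g * s * s' * g⁻¹)} (n / 2) ∧
      IsGreatest {k | ∃ g : DihedralGroup n, ∃ s ∈ S,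
        k = wordLength S (g * s * g⁻¹)} (n / 2) := by
  obtain ⟨m, hm⟩ := heven
  replace hm : n = 2 * m := by omega
  have : NeZero n := ⟨by omega⟩
  have hS : ({sr 0, r 1 * sr 0, (r 1 : DihedralGroup n) ^ (n / 2)} : Set (DihedralGroup n)) =
      {sr 0, sr (-1), r (m : ZMod n)} := by
    rw [r_mul_sr, zero_sub, r_one_pow, show n / 2 = m by omega]
  have hsub : ({sr 0, sr (-1)} : Set (DihedralGroup n)) ⊆ {sr 0, sr (-1), r (m : ZMod n)} :=
    Set.insert_subset_insert (Set.singleton_subset_iff.2 (Set.mem_insert _ _))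
  have hdiam (g : DihedralGroup n) : wordLength {sr 0, sr (-1), r (m : ZMod n)} g ≤ n / 2 := by
    rw [wordLength_eq_ladderDist hm]
    exact (ladderDist_le _).trans (by omega)
  have hfar : wordLength {sr 0, sr (-1), r (m : ZMod n)} (sr ((m / 2 : ℕ) : ZMod n)) = n / 2 := by
    rw [wordLength_eq_ladderDist hm, cyclePos_sr_natCast, ladderDist_natCast (by omega)]
    omega
  rw [hS]
  obtain ⟨g₁, s₁, hs₁, hg₁⟩ := exists_conj_eq_sr (n := n) (m / 2 : ℕ)
  obtain ⟨g₂, s₂, hs₂, hg₂⟩ := exists_conj_mul_r_half_eq_sr hm (m / 2 : ℕ)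
  refine ⟨⟨⟨g₂, s₂, hsub hs₂, r m, by simp, by rw [hg₂, hfar]⟩, ?_⟩,
    ⟨⟨g₁, s₁, hsub hs₁, by rw [hg₁, hfar]⟩, ?_⟩⟩
  · rintro k ⟨g, s, -, s', -, rfl⟩
    exact hdiam _
  · rintro k ⟨g, s, -, rfl⟩
    exact hdiam _
end

section
/- Let n > 3 and S = {f, rf, r³f} in D_n. Then S generates D_n and λ₁(D_n, S) ≤ ⌊n/2⌋ + 1. -/
open DihedralGroup

/-!
Conjugates of reflections are reflections, so it suffices to write every reflection `sr m`
with at most `⌊n/2⌋ + 1` letters. Since `sr i * sr j = r (j - i)`, a pair of letters realises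
any rotation `r (-k)` with `k ≤ 3`, hence `r (-k)` costs `2⌈k/3⌉` letters, and
`sr k = r (-k) * sr 0`, `sr (-k) = sr 0 * r (-k)`. Every `m : ZMod n` is `±k` with `k ≤ n/2`,
and `2⌈k/3⌉ ≤ max k 2 ≤ n/2` once `n ≥ 4`. The same words show that `S` generates.
-/

lemma wordLength_prod_le {G : Type*} [Group G] {S : Set G} {l : List G}
    (hl : ∀ x ∈ l, x ∈ S) : wordLength S l.prod ≤ l.length :=
  Nat.sInf_le ⟨l, hl, rfl, rfl⟩

namespace DihedralGroup

variable {n : ℕ}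

def negRotationWord (n : ℕ) : ℕ → List (DihedralGroup n)
  | 0 => []
  | 1 => [sr 0, sr (-1)]
  | 2 => [sr (-1), sr (-3)]
  | k + 3 => sr 0 :: sr (-3) :: negRotationWord n k

lemma prod_negRotationWord : ∀ k, (negRotationWord n k).prod = r (-(k : ZMod n))
  | 0 => by simp [negRotationWord]
  | 1 | 2 => by norm_num [negRotationWord]
  | k + 3 => by
      simp only [negRotationWord, List.prod_cons, prod_negRotationWord k, sr_mul_r, sr_mul_sr]
      push_cast
      ring_nf

lemma length_negRotationWord : ∀ k, (negRotationWord n k).length = 2 * ((k + 2) / 3)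
  | 0 | 1 | 2 => rfl
  | k + 3 => by
      simp only [negRotationWord, List.length_cons, length_negRotationWord k]
      omega

lemma mem_of_mem_negRotationWord :
    ∀ k, ∀ x ∈ negRotationWord n k, x ∈ ({sr 0, sr (-1), sr (-3)} : Set (DihedralGroup n))
  | 0 | 1 | 2 => by simp [negRotationWord]
  | k + 3 => by
      simp only [negRotationWord, List.mem_cons, forall_eq_or_imp]
      exact ⟨.inl rfl, .inr (.inr rfl), mem_of_mem_negRotationWord k⟩

lemma generators_eq :
    ({sr 0, r 1 * sr 0, (r 1 : DihedralGroup n) ^ 3 * sr 0} : Set (DihedralGroup n))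
      = {sr 0, sr (-1), sr (-3)} := by
  simp only [r_one_pow, r_mul_sr, zero_sub, Nat.cast_ofNat]

lemma exists_word_sr [NeZero n] (m : ZMod n) :
    ∃ l : List (DihedralGroup n), (∀ x ∈ l, x ∈ ({sr 0, sr (-1), sr (-3)} : Set _)) ∧
      l.prod = sr m ∧ l.length ≤ 2 * ((n / 2 + 2) / 3) + 1 := by
  set k := m.valMinAbs.natAbs
  have hk : k ≤ n / 2 := ZMod.natAbs_valMinAbs_le m
  have hlen : 2 * ((k + 2) / 3) + 1 ≤ 2 * ((n / 2 + 2) / 3) + 1 := by gcongr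
  have hm : m = k ∨ m = -k := by
    have := ZMod.natCast_natAbs_valMinAbs m
    split_ifs at this <;> simp [k, this]
  rcases hm with hm | hm <;> rw [hm]
  · refine ⟨negRotationWord n k ++ [sr 0], ?_, ?_, ?_⟩
    · simp only [List.mem_append, List.mem_singleton]
      rintro x (hx | rfl)
      exacts [mem_of_mem_negRotationWord k x hx, .inl rfl]
    · simp [prod_negRotationWord]
    · simpa [length_negRotationWord] using hlen
  · refine ⟨sr 0 :: negRotationWord n k, ?_, ?_, ?_⟩
    · simp only [List.mem_cons, forall_eq_or_imp]
      exact ⟨.inl rfl, mem_of_mem_negRotationWord k⟩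
    · simp [prod_negRotationWord]
    · simpa [length_negRotationWord] using hlen

lemma exists_conj_sr_eq_sr (g : DihedralGroup n) (i : ZMod n) :
    ∃ j, g * sr i * g⁻¹ = sr j := by
  rcases g with k | k
  · exact ⟨i - k - k, by simp [inv_r, sub_eq_add_neg]⟩
  · exact ⟨k - (i - k), by simp⟩

end DihedralGroup

theorem stmt18 (n : ℕ) (hn : 3 < n) :
    letI S : Set (DihedralGroup n) :=
      {sr 0, r 1 * sr 0, (r 1 : DihedralGroup n) ^ 3 * sr 0}
    Subgroup.closure S = ⊤ ∧
      ∀ g : DihedralGroup n, ∀ s ∈ S, wordLength S (g * s * g⁻¹) ≤ n / 2 + 1 := by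
  have : NeZero n := ⟨by omega⟩
  simp only [generators_eq]
  have hsr : ∀ m : ZMod n, sr m ∈ Subgroup.closure {sr 0, sr (-1), sr (-3)} := fun m ↦ by
    obtain ⟨l, hl, hprod, -⟩ := exists_word_sr m
    rw [← hprod]
    exact list_prod_mem fun x hx ↦ Subgroup.subset_closure (hl x hx)
  refine ⟨eq_top_iff.2 fun g _ ↦ ?_, fun g s hs ↦ ?_⟩
  · rcases g with i | i
    · simpa using mul_mem (hsr 0) (hsr i)
    · exact hsr i
  · obtain ⟨i, rfl⟩ : ∃ i, s = sr i := by rcases hs with rfl | rfl | rfl <;> exact ⟨_, rfl⟩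
    obtain ⟨j, hj⟩ := exists_conj_sr_eq_sr g i
    obtain ⟨l, hl, hprod, hlen⟩ := exists_word_sr j
    rw [hj, ← hprod]
    calc wordLength _ l.prod ≤ l.length := wordLength_prod_le hl
      _ ≤ n / 2 + 1 := by omega
end
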